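/- arXiv:1412.7422 — 2 statements merged into one kernel-verified Lean document; each statement's English description precedes it below -/
import Mathlib

section
/- If one focal net of a generic discrete torsal line system l : ℤ^m → {lines in ℝP^N} (m ≥ 3) is a Q-net, then the line system is fundamental, i.e., all focal nets are Q-nets. Concretely, on a single elementary 3-cube: the quadrilaterals (f^i, f^i_i, f^i_{ij}, f^i_j) are automatically planar since they lie in the focal plane l_i ∨ l_{ij}, and planarity of one quadrilateral of type (f^i, f^i_j, f^i_{jk}, f^i_k) implies planarity of the analogous quadrilaterals for the other focal nets. -/
/-!
STATEMENT 7: if one focal net of a generic discrete torsal line system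
`l : ℤ³ → {lines in ℝP^N}` is a Q-net, then the line system is fundamental,
i.e. all focal nets are Q-nets.

`ℝP^N` is modelled by linear subspaces of `ℝ^{N+1}`: lines = rank-2 subspaces.
The `i`-th focal net is `f^i(z) = l(z) ⊓ l(z + e_i)`; a net of points is a
Q-net iff all its elementary quadrilaterals are coplanar quadruples (join of
linear rank ≤ 3).
-/

open Submodule

abbrev PV (N : ℕ) := Fin (N + 1) → ℝ

def IsLine {N : ℕ} (L : Submodule ℝ (PV N)) : Prop := Module.finrank ℝ L = 2

def Planar4 {N : ℕ} (a b c d : Submodule ℝ (PV N)) : Prop :=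
  Module.finrank ℝ ↥(a ⊔ b ⊔ c ⊔ d) ≤ 3

/-- A net `f : ℤ³ → ℝP^N` is a Q-net: all elementary quadrilaterals (in the
three coordinate directions) are planar. -/
def IsQNet {N : ℕ} (f : ℤ → ℤ → ℤ → Submodule ℝ (PV N)) : Prop :=
  ∀ a b c : ℤ,
    Planar4 (f a b c) (f (a+1) b c) (f (a+1) (b+1) c) (f a (b+1) c) ∧
    Planar4 (f a b c) (f (a+1) b c) (f (a+1) b (c+1)) (f a b (c+1)) ∧
    Planar4 (f a b c) (f a (b+1) c) (f a (b+1) (c+1)) (f a b (c+1))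

/-- First focal net of a line system `l : ℤ³ → 𝓛^N`. -/
def focal1 {N : ℕ} (l : ℤ → ℤ → ℤ → Submodule ℝ (PV N)) (a b c : ℤ) :
    Submodule ℝ (PV N) := l a b c ⊓ l (a+1) b c

def focal2 {N : ℕ} (l : ℤ → ℤ → ℤ → Submodule ℝ (PV N)) (a b c : ℤ) :
    Submodule ℝ (PV N) := l a b c ⊓ l a (b+1) c

def focal3 {N : ℕ} (l : ℤ → ℤ → ℤ → Submodule ℝ (PV N)) (a b c : ℤ) :
    Submodule ℝ (PV N) := l a b c ⊓ l a b (c+1)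

open Module

section Helpers

variable {N : ℕ}

private lemma inf_bot_of_le {X Y P Q : Submodule ℝ (PV N)} (hX : X ≤ P) (hY : Y ≤ Q)
    (h : P ⊓ Q = ⊥) : X ⊓ Y = ⊥ :=
  le_bot_iff.mp (le_trans (inf_le_inf hX hY) h.le)

private lemma bc {X Y : Submodule ℝ (PV N)} (h : X ⊓ Y = ⊥) : Y ⊓ X = ⊥ := by
  rwa [inf_comm] at h

private lemma one_le_fr {X : Submodule ℝ (PV N)} (h : X ≠ ⊥) : 1 ≤ finrank ℝ X := by
  rcases Nat.eq_zero_or_pos (finrank ℝ X) with h0 | h1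
  · exact absurd (Submodule.finrank_eq_zero.mp h0) h
  · exact h1

private lemma fr_sup_of_disj {X Y : Submodule ℝ (PV N)} (h : X ⊓ Y = ⊥) :
    finrank ℝ ↥(X ⊔ Y) = finrank ℝ X + finrank ℝ Y := by
  have e := Submodule.finrank_sup_add_finrank_inf_eq X Y
  rw [h] at e
  simpa using e

private lemma two_le_sup {X Y : Submodule ℝ (PV N)} (hX : X ≠ ⊥) (hY : Y ≠ ⊥)
    (h : X ⊓ Y = ⊥) : 2 ≤ finrank ℝ ↥(X ⊔ Y) := by
  have h1 := one_le_fr hX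
  have h2 := one_le_fr hY
  rw [fr_sup_of_disj h]
  omega

private lemma sup3 {L1 L2 : Submodule ℝ (PV N)} (h1 : finrank ℝ L1 = 2)
    (h2 : finrank ℝ L2 = 2) (h : L1 ⊓ L2 ≠ ⊥) : finrank ℝ ↥(L1 ⊔ L2) ≤ 3 := by
  have e := Submodule.finrank_sup_add_finrank_inf_eq L1 L2
  have := one_le_fr h
  omega

private lemma planar4_of_le {X Y Z W P : Submodule ℝ (PV N)} (hX : X ≤ P) (hY : Y ≤ P)
    (hZ : Z ≤ P) (hW : W ≤ P) (hP : finrank ℝ P ≤ 3) : Planar4 X Y Z W :=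
  le_trans (Submodule.finrank_mono (sup_le (sup_le (sup_le hX hY) hZ) hW)) hP

private lemma planar4_swap24 {a b c d : Submodule ℝ (PV N)} (h : Planar4 a b c d) :
    Planar4 a d c b := by
  have e : a ⊔ d ⊔ c ⊔ b = a ⊔ b ⊔ c ⊔ d := by
    rw [sup_right_comm (a ⊔ d) c b, sup_right_comm a d b, sup_right_comm (a ⊔ b) d c]
  unfold Planar4 at h ⊢
  rw [e]
  exact h

/-- The core one-cube lemma: if the transversal quadrilateral of the first focal
net of an elementary cube is planar, so is the transversal quadrilateral of the
second focal net.  Here `lxyz` is the line at vertex `(x,y,z)` of the cube. -/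
private lemma key (l000 l100 l010 l001 l110 l101 l011 l111 : Submodule ℝ (PV N))
    (r000 : finrank ℝ l000 = 2) (r100 : finrank ℝ l100 = 2)
    (r010 : finrank ℝ l010 = 2) (r001 : finrank ℝ l001 = 2)
    (r110 : finrank ℝ l110 = 2) (r101 : finrank ℝ l101 = 2)
    (r011 : finrank ℝ l011 = 2) (r111 : finrank ℝ l111 = 2)
    (hc00 : l000 ⊓ l001 ≠ ⊥) (hc10 : l100 ⊓ l101 ≠ ⊥)
    (hc01 : l010 ⊓ l011 ≠ ⊥) (hc11 : l110 ⊓ l111 ≠ ⊥)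
    (ha00 : l000 ⊓ l100 ≠ ⊥) (ha01 : l001 ⊓ l101 ≠ ⊥)
    (ha10 : l010 ⊓ l110 ≠ ⊥) (ha11 : l011 ⊓ l111 ≠ ⊥)
    (hb00 : l000 ⊓ l010 ≠ ⊥) (hb10 : l100 ⊓ l110 ≠ ⊥)
    (hb11 : l101 ⊓ l111 ≠ ⊥) (hb01 : l001 ⊓ l011 ≠ ⊥)
    (s1 : l010 ⊓ l100 = ⊥) (s2 : l001 ⊓ l111 = ⊥) (s3 : l000 ⊓ l011 = ⊥)
    (s4 : l000 ⊓ l110 = ⊥) (s5 : l101 ⊓ l011 = ⊥) (s6 : l100 ⊓ l111 = ⊥)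
    (s7 : l000 ⊓ l101 = ⊥) (s8 : l010 ⊓ l111 = ⊥)
    (s9 : l010 ⊓ l001 = ⊥) (s10 : l110 ⊓ l101 = ⊥)
    (hq : Planar4 (l000 ⊓ l100) (l010 ⊓ l110) (l011 ⊓ l111) (l001 ⊓ l101)) :
    Planar4 (l000 ⊓ l010) (l100 ⊓ l110) (l101 ⊓ l111) (l001 ⊓ l011) := by
  set v00 := l000 ⊓ l100 with hv00
  set v10 := l010 ⊓ l110 with hv10
  set v11 := l011 ⊓ l111 with hv11
  set v01 := l001 ⊓ l101 with hv01
  set A := l000 ⊓ l010 with hA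
  set B := l100 ⊓ l110 with hB
  set C := l101 ⊓ l111 with hC
  set D := l001 ⊓ l011 with hD
  have hq' : finrank ℝ ↥(v00 ⊔ v10 ⊔ v11 ⊔ v01) ≤ 3 := hq
  -- the two "diagonals" m1 = v00 ∨ v01 and m2 = v10 ∨ v11 meet
  have dm1 : v00 ⊓ v01 = ⊥ := inf_bot_of_le inf_le_left inf_le_right s7
  have dm2 : v10 ⊓ v11 = ⊥ := inf_bot_of_le inf_le_left inf_le_right s8
  have hm1 : 2 ≤ finrank ℝ ↥(v00 ⊔ v01) := two_le_sup ha00 ha01 dm1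
  have hm2 : 2 ≤ finrank ℝ ↥(v10 ⊔ v11) := two_le_sup ha10 ha11 dm2
  have hm3 : finrank ℝ ↥((v00 ⊔ v01) ⊔ (v10 ⊔ v11)) ≤ 3 := by
    refine le_trans (Submodule.finrank_mono ?_) hq'
    refine sup_le (sup_le ?_ ?_) (sup_le ?_ ?_)
    · exact le_sup_of_le_left (le_sup_of_le_left le_sup_left)
    · exact le_sup_right
    · exact le_sup_of_le_left (le_sup_of_le_left le_sup_right)
    · exact le_sup_of_le_left le_sup_right
  have em := Submodule.finrank_sup_add_finrank_inf_eq (v00 ⊔ v01) (v10 ⊔ v11)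
  have hPrank : 1 ≤ finrank ℝ ↥((v00 ⊔ v01) ⊓ (v10 ⊔ v11)) := by omega
  have hPne : (v00 ⊔ v01) ⊓ (v10 ⊔ v11) ≠ ⊥ := by
    intro h0
    rw [h0] at hPrank
    simp [finrank_bot] at hPrank
  -- the S-side: A ⊔ D equals (l000 ⊔ l001) ⊓ (l010 ⊔ l011)
  have hS1 : finrank ℝ ↥(l000 ⊔ l001) ≤ 3 := sup3 r000 r001 hc00
  have hS2 : finrank ℝ ↥(l010 ⊔ l011) ≤ 3 := sup3 r010 r011 hc01
  have hS12 : 4 ≤ finrank ℝ ↥((l000 ⊔ l001) ⊔ (l010 ⊔ l011)) := by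
    have d1 : A ⊓ v00 = ⊥ := inf_bot_of_le inf_le_right inf_le_right s1
    have d2 : D ⊓ v11 = ⊥ := inf_bot_of_le inf_le_left inf_le_right s2
    have h1 : 2 ≤ finrank ℝ ↥(A ⊔ v00) := two_le_sup hb00 ha00 d1
    have h2 : 2 ≤ finrank ℝ ↥(D ⊔ v11) := two_le_sup hb01 ha11 d2
    have d3 : (A ⊔ v00) ⊓ (D ⊔ v11) = ⊥ :=
      inf_bot_of_le (sup_le inf_le_left inf_le_left) (sup_le inf_le_right inf_le_left) s3
    have e := fr_sup_of_disj d3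
    have h4 : 4 ≤ finrank ℝ ↥((A ⊔ v00) ⊔ (D ⊔ v11)) := by omega
    refine le_trans h4 (Submodule.finrank_mono ?_)
    refine sup_le ?_ ?_
    · exact le_trans (sup_le inf_le_left inf_le_left) (le_sup_of_le_left le_sup_left)
    · exact le_trans (sup_le inf_le_right inf_le_left) (le_sup_of_le_right le_sup_right)
  have eS := Submodule.finrank_sup_add_finrank_inf_eq (l000 ⊔ l001) (l010 ⊔ l011)
  have dAD : A ⊓ D = ⊥ := inf_bot_of_le inf_le_right inf_le_left s9
  have hAD2 : 2 ≤ finrank ℝ ↥(A ⊔ D) := two_le_sup hb00 hb01 dAD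
  have hADle : A ⊔ D ≤ (l000 ⊔ l001) ⊓ (l010 ⊔ l011) := by
    refine le_inf ?_ ?_
    · exact sup_le (le_sup_of_le_left inf_le_left) (le_sup_of_le_right inf_le_left)
    · exact sup_le (le_sup_of_le_left inf_le_right) (le_sup_of_le_right inf_le_right)
  have hADeq : A ⊔ D = (l000 ⊔ l001) ⊓ (l010 ⊔ l011) :=
    Submodule.eq_of_le_of_finrank_le hADle (by omega)
  have hmS : (v00 ⊔ v01) ⊓ (v10 ⊔ v11) ≤ A ⊔ D := by
    rw [hADeq]
    refine inf_le_inf ?_ ?_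
    · exact sup_le (le_sup_of_le_left inf_le_left) (le_sup_of_le_right inf_le_left)
    · exact sup_le (le_sup_of_le_left inf_le_left) (le_sup_of_le_right inf_le_left)
  -- the T-side: B ⊔ C equals (l100 ⊔ l101) ⊓ (l110 ⊔ l111)
  have hT1 : finrank ℝ ↥(l100 ⊔ l101) ≤ 3 := sup3 r100 r101 hc10
  have hT2 : finrank ℝ ↥(l110 ⊔ l111) ≤ 3 := sup3 r110 r111 hc11
  have hT12 : 4 ≤ finrank ℝ ↥((l100 ⊔ l101) ⊔ (l110 ⊔ l111)) := by
    have d1 : B ⊓ v00 = ⊥ := inf_bot_of_le inf_le_right inf_le_left (bc s4)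
    have d2 : C ⊓ v11 = ⊥ := inf_bot_of_le inf_le_left inf_le_left s5
    have h1 : 2 ≤ finrank ℝ ↥(B ⊔ v00) := two_le_sup hb10 ha00 d1
    have h2 : 2 ≤ finrank ℝ ↥(C ⊔ v11) := two_le_sup hb11 ha11 d2
    have d3 : (B ⊔ v00) ⊓ (C ⊔ v11) = ⊥ :=
      inf_bot_of_le (sup_le inf_le_left inf_le_right) (sup_le inf_le_right inf_le_right) s6
    have e := fr_sup_of_disj d3
    have h4 : 4 ≤ finrank ℝ ↥((B ⊔ v00) ⊔ (C ⊔ v11)) := by omega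
    refine le_trans h4 (Submodule.finrank_mono ?_)
    refine sup_le ?_ ?_
    · exact le_trans (sup_le inf_le_left inf_le_right) (le_sup_of_le_left le_sup_left)
    · exact le_trans (sup_le inf_le_right inf_le_right) (le_sup_of_le_right le_sup_right)
  have eT := Submodule.finrank_sup_add_finrank_inf_eq (l100 ⊔ l101) (l110 ⊔ l111)
  have dBC : B ⊓ C = ⊥ := inf_bot_of_le inf_le_right inf_le_left s10
  have hBC2 : 2 ≤ finrank ℝ ↥(B ⊔ C) := two_le_sup hb10 hb11 dBC
  have hBCle : B ⊔ C ≤ (l100 ⊔ l101) ⊓ (l110 ⊔ l111) := by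
    refine le_inf ?_ ?_
    · exact sup_le (le_sup_of_le_left inf_le_left) (le_sup_of_le_right inf_le_left)
    · exact sup_le (le_sup_of_le_left inf_le_right) (le_sup_of_le_right inf_le_right)
  have hBCeq : B ⊔ C = (l100 ⊔ l101) ⊓ (l110 ⊔ l111) :=
    Submodule.eq_of_le_of_finrank_le hBCle (by omega)
  have hmT : (v00 ⊔ v01) ⊓ (v10 ⊔ v11) ≤ B ⊔ C := by
    rw [hBCeq]
    refine inf_le_inf ?_ ?_
    · exact sup_le (le_sup_of_le_left inf_le_right) (le_sup_of_le_right inf_le_right)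
    · exact sup_le (le_sup_of_le_left inf_le_right) (le_sup_of_le_right inf_le_right)
  -- conclusion
  have hADr : finrank ℝ ↥(A ⊔ D) ≤ 2 := by rw [hADeq]; omega
  have hBCr : finrank ℝ ↥(B ⊔ C) ≤ 2 := by rw [hBCeq]; omega
  have hIne : (A ⊔ D) ⊓ (B ⊔ C) ≠ ⊥ := by
    intro h0
    exact hPne (le_bot_iff.mp (h0 ▸ le_inf hmS hmT))
  have hI1 : 1 ≤ finrank ℝ ↥((A ⊔ D) ⊓ (B ⊔ C)) := one_le_fr hIne
  have eF := Submodule.finrank_sup_add_finrank_inf_eq (A ⊔ D) (B ⊔ C)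
  have hFin : finrank ℝ ↥((A ⊔ D) ⊔ (B ⊔ C)) ≤ 3 := by omega
  refine planar4_of_le ?_ ?_ ?_ ?_ hFin
  · exact le_sup_of_le_left le_sup_left
  · exact le_sup_of_le_right le_sup_left
  · exact le_sup_of_le_right le_sup_right
  · exact le_sup_of_le_left le_sup_right

end Helpers
theorem one_focal_net_qnet_implies_fundamental {N : ℕ} (hN : 3 ≤ N)
    (l : ℤ → ℤ → ℤ → Submodule ℝ (PV N))
    (hline : ∀ a b c : ℤ, IsLine (l a b c))
    -- adjacent lines intersect
    (hadj1 : ∀ a b c : ℤ, l a b c ⊓ l (a+1) b c ≠ ⊥)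
    (hadj2 : ∀ a b c : ℤ, l a b c ⊓ l a (b+1) c ≠ ⊥)
    (hadj3 : ∀ a b c : ℤ, l a b c ⊓ l a b (c+1) ≠ ⊥)
    -- lines at opposite vertices of each elementary quadrilateral are skew
    (hskew12 : ∀ a b c : ℤ, l a b c ⊓ l (a+1) (b+1) c = ⊥ ∧
      l (a+1) b c ⊓ l a (b+1) c = ⊥)
    (hskew13 : ∀ a b c : ℤ, l a b c ⊓ l (a+1) b (c+1) = ⊥ ∧
      l (a+1) b c ⊓ l a b (c+1) = ⊥)
    (hskew23 : ∀ a b c : ℤ, l a b c ⊓ l a (b+1) (c+1) = ⊥ ∧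
      l a (b+1) c ⊓ l a b (c+1) = ⊥)
    -- one focal net is a Q-net
    (hQ : IsQNet (focal1 l) ∨ IsQNet (focal2 l) ∨ IsQNet (focal3 l)) :
    -- then all focal nets are Q-nets, i.e. the system is fundamental
    IsQNet (focal1 l) ∧ IsQNet (focal2 l) ∧ IsQNet (focal3 l) := by
  -- the six "automatic" families of planar quadrilaterals
  have A11 : ∀ a b c : ℤ, Planar4 (focal1 l a b c) (focal1 l (a+1) b c)
      (focal1 l (a+1) (b+1) c) (focal1 l a (b+1) c) := by
    intro a b c
    simp only [focal1]
    exact planar4_of_le (le_sup_of_le_left inf_le_right) (le_sup_of_le_left inf_le_left)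
      (le_sup_of_le_right inf_le_left) (le_sup_of_le_right inf_le_right)
      (sup3 (hline _ _ _) (hline _ _ _) (hadj2 (a+1) b c))
  have A12 : ∀ a b c : ℤ, Planar4 (focal1 l a b c) (focal1 l (a+1) b c)
      (focal1 l (a+1) b (c+1)) (focal1 l a b (c+1)) := by
    intro a b c
    simp only [focal1]
    exact planar4_of_le (le_sup_of_le_left inf_le_right) (le_sup_of_le_left inf_le_left)
      (le_sup_of_le_right inf_le_left) (le_sup_of_le_right inf_le_right)
      (sup3 (hline _ _ _) (hline _ _ _) (hadj3 (a+1) b c))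
  have A21 : ∀ a b c : ℤ, Planar4 (focal2 l a b c) (focal2 l (a+1) b c)
      (focal2 l (a+1) (b+1) c) (focal2 l a (b+1) c) := by
    intro a b c
    simp only [focal2]
    exact planar4_of_le (le_sup_of_le_left inf_le_right) (le_sup_of_le_right inf_le_right)
      (le_sup_of_le_right inf_le_left) (le_sup_of_le_left inf_le_left)
      (sup3 (hline _ _ _) (hline _ _ _) (hadj1 a (b+1) c))
  have A23 : ∀ a b c : ℤ, Planar4 (focal2 l a b c) (focal2 l a (b+1) c)
      (focal2 l a (b+1) (c+1)) (focal2 l a b (c+1)) := by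
    intro a b c
    simp only [focal2]
    exact planar4_of_le (le_sup_of_le_left inf_le_right) (le_sup_of_le_left inf_le_left)
      (le_sup_of_le_right inf_le_left) (le_sup_of_le_right inf_le_right)
      (sup3 (hline _ _ _) (hline _ _ _) (hadj3 a (b+1) c))
  have A32 : ∀ a b c : ℤ, Planar4 (focal3 l a b c) (focal3 l (a+1) b c)
      (focal3 l (a+1) b (c+1)) (focal3 l a b (c+1)) := by
    intro a b c
    simp only [focal3]
    exact planar4_of_le (le_sup_of_le_left inf_le_right) (le_sup_of_le_right inf_le_right)
      (le_sup_of_le_right inf_le_left) (le_sup_of_le_left inf_le_left)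
      (sup3 (hline _ _ _) (hline _ _ _) (hadj1 a b (c+1)))
  have A33 : ∀ a b c : ℤ, Planar4 (focal3 l a b c) (focal3 l a (b+1) c)
      (focal3 l a (b+1) (c+1)) (focal3 l a b (c+1)) := by
    intro a b c
    simp only [focal3]
    exact planar4_of_le (le_sup_of_le_left inf_le_right) (le_sup_of_le_right inf_le_right)
      (le_sup_of_le_right inf_le_left) (le_sup_of_le_left inf_le_left)
      (sup3 (hline _ _ _) (hline _ _ _) (hadj2 a b (c+1)))
  -- the "hard" transversal quadrilaterals of the three focal nets
  let H1 : ℤ → ℤ → ℤ → Prop := fun a b c => Planar4 (focal1 l a b c) (focal1 l a (b+1) c)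
      (focal1 l a (b+1) (c+1)) (focal1 l a b (c+1))
  let H2 : ℤ → ℤ → ℤ → Prop := fun a b c => Planar4 (focal2 l a b c) (focal2 l (a+1) b c)
      (focal2 l (a+1) b (c+1)) (focal2 l a b (c+1))
  let H3 : ℤ → ℤ → ℤ → Prop := fun a b c => Planar4 (focal3 l a b c) (focal3 l (a+1) b c)
      (focal3 l (a+1) (b+1) c) (focal3 l a (b+1) c)
  -- transfer lemmas between the hard quadrilaterals, all instances of `key`
  have k12 : ∀ a b c : ℤ, H1 a b c → H2 a b c := by
    intro a b c h
    simp only [H1, H2, focal1, focal2] at h ⊢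
    exact key (l a b c) (l (a+1) b c) (l a (b+1) c) (l a b (c+1)) (l (a+1) (b+1) c)
      (l (a+1) b (c+1)) (l a (b+1) (c+1)) (l (a+1) (b+1) (c+1))
      (hline a b c) (hline (a+1) b c) (hline a (b+1) c) (hline a b (c+1))
      (hline (a+1) (b+1) c) (hline (a+1) b (c+1)) (hline a (b+1) (c+1))
      (hline (a+1) (b+1) (c+1))
      (hadj3 a b c) (hadj3 (a+1) b c) (hadj3 a (b+1) c) (hadj3 (a+1) (b+1) c)
      (hadj1 a b c) (hadj1 a b (c+1)) (hadj1 a (b+1) c) (hadj1 a (b+1) (c+1))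
      (hadj2 a b c) (hadj2 (a+1) b c) (hadj2 (a+1) b (c+1)) (hadj2 a b (c+1))
      (bc (hskew12 a b c).2) ((hskew12 a b (c+1)).1) ((hskew23 a b c).1)
      ((hskew12 a b c).1) ((hskew12 a b (c+1)).2) ((hskew23 (a+1) b c).1)
      ((hskew13 a b c).1) ((hskew13 a (b+1) c).1) ((hskew23 a b c).2)
      ((hskew23 (a+1) b c).2) h
  have k13 : ∀ a b c : ℤ, H1 a b c → H3 a b c := by
    intro a b c h
    simp only [H1, H3, focal1, focal3] at h ⊢
    exact key (l a b c) (l (a+1) b c) (l a b (c+1)) (l a (b+1) c) (l (a+1) b (c+1))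
      (l (a+1) (b+1) c) (l a (b+1) (c+1)) (l (a+1) (b+1) (c+1))
      (hline a b c) (hline (a+1) b c) (hline a b (c+1)) (hline a (b+1) c)
      (hline (a+1) b (c+1)) (hline (a+1) (b+1) c) (hline a (b+1) (c+1))
      (hline (a+1) (b+1) (c+1))
      (hadj2 a b c) (hadj2 (a+1) b c) (hadj2 a b (c+1)) (hadj2 (a+1) b (c+1))
      (hadj1 a b c) (hadj1 a (b+1) c) (hadj1 a b (c+1)) (hadj1 a (b+1) (c+1))
      (hadj3 a b c) (hadj3 (a+1) b c) (hadj3 (a+1) (b+1) c) (hadj3 a (b+1) c)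
      (bc (hskew13 a b c).2) ((hskew13 a (b+1) c).1) ((hskew23 a b c).1)
      ((hskew13 a b c).1) ((hskew13 a (b+1) c).2) ((hskew23 (a+1) b c).1)
      ((hskew12 a b c).1) ((hskew12 a b (c+1)).1) (bc (hskew23 a b c).2)
      (bc (hskew23 (a+1) b c).2) (planar4_swap24 h)
  have k21 : ∀ a b c : ℤ, H2 a b c → H1 a b c := by
    intro a b c h
    simp only [H1, H2, focal1, focal2] at h ⊢
    exact key (l a b c) (l a (b+1) c) (l (a+1) b c) (l a b (c+1)) (l (a+1) (b+1) c)
      (l a (b+1) (c+1)) (l (a+1) b (c+1)) (l (a+1) (b+1) (c+1))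
      (hline a b c) (hline a (b+1) c) (hline (a+1) b c) (hline a b (c+1))
      (hline (a+1) (b+1) c) (hline a (b+1) (c+1)) (hline (a+1) b (c+1))
      (hline (a+1) (b+1) (c+1))
      (hadj3 a b c) (hadj3 a (b+1) c) (hadj3 (a+1) b c) (hadj3 (a+1) (b+1) c)
      (hadj2 a b c) (hadj2 a b (c+1)) (hadj2 (a+1) b c) (hadj2 (a+1) b (c+1))
      (hadj1 a b c) (hadj1 a (b+1) c) (hadj1 a (b+1) (c+1)) (hadj1 a b (c+1))
      ((hskew12 a b c).2) ((hskew12 a b (c+1)).1) ((hskew13 a b c).1)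
      ((hskew12 a b c).1) (bc (hskew12 a b (c+1)).2) ((hskew13 a (b+1) c).1)
      ((hskew23 a b c).1) ((hskew23 (a+1) b c).1) ((hskew13 a b c).2)
      ((hskew13 a (b+1) c).2) h
  have k23 : ∀ a b c : ℤ, H2 a b c → H3 a b c := by
    intro a b c h
    simp only [H2, H3, focal2, focal3] at h ⊢
    refine planar4_swap24 (key (l a b c) (l a (b+1) c) (l a b (c+1)) (l (a+1) b c)
      (l a (b+1) (c+1)) (l (a+1) (b+1) c) (l (a+1) b (c+1)) (l (a+1) (b+1) (c+1))
      (hline a b c) (hline a (b+1) c) (hline a b (c+1)) (hline (a+1) b c)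
      (hline a (b+1) (c+1)) (hline (a+1) (b+1) c) (hline (a+1) b (c+1))
      (hline (a+1) (b+1) (c+1))
      (hadj1 a b c) (hadj1 a (b+1) c) (hadj1 a b (c+1)) (hadj1 a (b+1) (c+1))
      (hadj2 a b c) (hadj2 (a+1) b c) (hadj2 a b (c+1)) (hadj2 (a+1) b (c+1))
      (hadj3 a b c) (hadj3 a (b+1) c) (hadj3 (a+1) (b+1) c) (hadj3 (a+1) b c)
      (bc (hskew23 a b c).2) ((hskew23 (a+1) b c).1) ((hskew13 a b c).1)
      ((hskew23 a b c).1) ((hskew23 (a+1) b c).2) ((hskew13 a (b+1) c).1)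
      ((hskew12 a b c).1) ((hskew12 a b (c+1)).1) (bc (hskew13 a b c).2)
      (bc (hskew13 a (b+1) c).2) (planar4_swap24 h))
  have k31 : ∀ a b c : ℤ, H3 a b c → H1 a b c := by
    intro a b c h
    simp only [H1, H3, focal1, focal3] at h ⊢
    refine planar4_swap24 (key (l a b c) (l a b (c+1)) (l (a+1) b c) (l a (b+1) c)
      (l (a+1) b (c+1)) (l a (b+1) (c+1)) (l (a+1) (b+1) c) (l (a+1) (b+1) (c+1))
      (hline a b c) (hline a b (c+1)) (hline (a+1) b c) (hline a (b+1) c)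
      (hline (a+1) b (c+1)) (hline a (b+1) (c+1)) (hline (a+1) (b+1) c)
      (hline (a+1) (b+1) (c+1))
      (hadj2 a b c) (hadj2 a b (c+1)) (hadj2 (a+1) b c) (hadj2 (a+1) b (c+1))
      (hadj3 a b c) (hadj3 a (b+1) c) (hadj3 (a+1) b c) (hadj3 (a+1) (b+1) c)
      (hadj1 a b c) (hadj1 a b (c+1)) (hadj1 a (b+1) (c+1)) (hadj1 a (b+1) c)
      ((hskew13 a b c).2) ((hskew13 a (b+1) c).1) ((hskew12 a b c).1)
      ((hskew13 a b c).1) (bc (hskew13 a (b+1) c).2) ((hskew12 a b (c+1)).1)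
      ((hskew23 a b c).1) ((hskew23 (a+1) b c).1) ((hskew12 a b c).2)
      ((hskew12 a b (c+1)).2) h)
  have k32 : ∀ a b c : ℤ, H3 a b c → H2 a b c := by
    intro a b c h
    simp only [H2, H3, focal2, focal3] at h ⊢
    refine planar4_swap24 (key (l a b c) (l a b (c+1)) (l a (b+1) c) (l (a+1) b c)
      (l a (b+1) (c+1)) (l (a+1) b (c+1)) (l (a+1) (b+1) c) (l (a+1) (b+1) (c+1))
      (hline a b c) (hline a b (c+1)) (hline a (b+1) c) (hline (a+1) b c)
      (hline a (b+1) (c+1)) (hline (a+1) b (c+1)) (hline (a+1) (b+1) c)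
      (hline (a+1) (b+1) (c+1))
      (hadj1 a b c) (hadj1 a b (c+1)) (hadj1 a (b+1) c) (hadj1 a (b+1) (c+1))
      (hadj3 a b c) (hadj3 (a+1) b c) (hadj3 a (b+1) c) (hadj3 (a+1) (b+1) c)
      (hadj2 a b c) (hadj2 a b (c+1)) (hadj2 (a+1) b (c+1)) (hadj2 (a+1) b c)
      ((hskew23 a b c).2) ((hskew23 (a+1) b c).1) ((hskew12 a b c).1)
      ((hskew23 a b c).1) (bc (hskew23 (a+1) b c).2) ((hskew12 a b (c+1)).1)
      ((hskew13 a b c).1) ((hskew13 a (b+1) c).1) (bc (hskew12 a b c).2)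
      (bc (hskew12 a b (c+1)).2) (planar4_swap24 h))
  -- from the hypothesis, all three hard families hold
  have hard : (∀ a b c : ℤ, H1 a b c) ∧ (∀ a b c : ℤ, H2 a b c) ∧ (∀ a b c : ℤ, H3 a b c) := by
    rcases hQ with h | h | h
    · have h1 : ∀ a b c : ℤ, H1 a b c := fun a b c => (h a b c).2.2
      exact ⟨h1, fun a b c => k12 a b c (h1 a b c), fun a b c => k13 a b c (h1 a b c)⟩
    · have h2 : ∀ a b c : ℤ, H2 a b c := fun a b c => (h a b c).2.1
      exact ⟨fun a b c => k21 a b c (h2 a b c), h2, fun a b c => k23 a b c (h2 a b c)⟩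
    · have h3 : ∀ a b c : ℤ, H3 a b c := fun a b c => (h a b c).1
      exact ⟨fun a b c => k31 a b c (h3 a b c), fun a b c => k32 a b c (h3 a b c), h3⟩
  exact ⟨fun a b c => ⟨A11 a b c, A12 a b c, hard.1 a b c⟩,
    fun a b c => ⟨A21 a b c, hard.2.1 a b c, A23 a b c⟩,
    fun a b c => ⟨hard.2.2 a b c, A32 a b c, A33 a b c⟩⟩
end

section
/- Focal nets of generic discrete torsal line systems in ℝP^N with N ≥ 4 are Q-nets: for a single elementary cube of lines in ℝP^N (N ≥ 4) in which adjacent lines intersect, opposite lines of faces are skew, and each quadruple of lines (l, l_i, l_j, l_k) spans a 4-dimensional subspace, every focal quadrilateral is planar. -/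
/-!
STATEMENT 8: focal nets of generic discrete torsal line systems in `ℝP^N`,
`N ≥ 4`, are Q-nets.  Single-cube version: for an elementary cube of lines in
`ℝP^N` (`N ≥ 4`) with adjacent lines intersecting, opposite lines of faces
skew, and each quadruple of lines at a vertex star spanning a 4-dimensional
projective subspace, every focal quadrilateral is planar.

`ℝP^N` is modelled by linear subspaces of `ℝ^{N+1}`: lines = rank 2; a
4-dimensional projective subspace has linear rank 5; planarity of four points
means their join has linear rank ≤ 3.
-/

open Submodule

section Aux

variable {N : ℕ}

/-- A nonzero submodule has finrank at least 1. -/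
lemma one_le_finrank_of_ne_bot {S : Submodule ℝ (PV N)} (h : S ≠ ⊥) :
    1 ≤ Module.finrank ℝ S := by
  by_contra hc
  push_neg at hc
  interval_cases h' : Module.finrank ℝ ↥S
  exact h (Submodule.finrank_eq_zero.mp h')

/-- A quadrilateral of lines `A ~ B, A ~ C, B ~ D, C ~ D` (adjacent intersect)
with `B, C` skew spans a space of rank at most 4. -/
lemma face_span_rank_le {A B C D : Submodule ℝ (PV N)}
    (hA : IsLine A) (hB : IsLine B) (hC : IsLine C) (hD : IsLine D)
    (hAB : A ⊓ B ≠ ⊥) (hAC : A ⊓ C ≠ ⊥) (hBD : B ⊓ D ≠ ⊥) (hCD : C ⊓ D ≠ ⊥)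
    (hBC : B ⊓ C = ⊥) :
    Module.finrank ℝ ↥(A ⊔ B ⊔ C ⊔ D) ≤ 4 := by
  -- D is contained in the span of A, B, C
  have hD_le : D ≤ A ⊔ B ⊔ C := by
    have hpq : (B ⊓ D) ⊓ (C ⊓ D) = ⊥ := by
      rw [← le_bot_iff, ← hBC]
      exact inf_le_inf inf_le_left inf_le_left
    have h2 : 2 ≤ Module.finrank ℝ ↥((B ⊓ D) ⊔ (C ⊓ D)) := by
      have := Submodule.finrank_sup_add_finrank_inf_eq (B ⊓ D) (C ⊓ D)
      rw [hpq, finrank_bot, add_zero] at this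
      have h1 := one_le_finrank_of_ne_bot hBD
      have h2 := one_le_finrank_of_ne_bot hCD
      omega
    have hle : (B ⊓ D) ⊔ (C ⊓ D) ≤ D := sup_le inf_le_right inf_le_right
    have heq : (B ⊓ D) ⊔ (C ⊓ D) = D :=
      Submodule.eq_of_le_of_finrank_le hle (by rw [hD]; exact h2)
    rw [← heq]
    exact sup_le (inf_le_left.trans (le_sup_of_le_left le_sup_right))
      (inf_le_left.trans le_sup_right)
  have hABC : A ⊔ B ⊔ C ⊔ D = A ⊔ B ⊔ C := by
    rw [sup_eq_left.mpr hD_le]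
  rw [hABC]
  -- rank (A ⊔ B) ≤ 3
  have hA' : Module.finrank ℝ ↥A = 2 := hA
  have hB' : Module.finrank ℝ ↥B = 2 := hB
  have hC' : Module.finrank ℝ ↥C = 2 := hC
  have hAB3 : Module.finrank ℝ ↥(A ⊔ B) ≤ 3 := by
    have e1 := Submodule.finrank_sup_add_finrank_inf_eq A B
    have e2 := one_le_finrank_of_ne_bot hAB
    omega
  -- rank (A ⊔ B ⊔ C) ≤ 4
  have hACne : (A ⊔ B) ⊓ C ≠ ⊥ := by
    intro hbot
    apply hAC
    rw [← le_bot_iff, ← hbot]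
    exact inf_le_inf_right _ le_sup_left
  have e3 := Submodule.finrank_sup_add_finrank_inf_eq (A ⊔ B) C
  have e4 := one_le_finrank_of_ne_bot hACne
  omega

/-- Planarity via a pair of rank-4 faces whose join has rank at least 5. -/
lemma planar_of_faces {P Q a b c d : Submodule ℝ (PV N)}
    (hP : Module.finrank ℝ ↥P ≤ 4) (hQ : Module.finrank ℝ ↥Q ≤ 4)
    (h5 : 5 ≤ Module.finrank ℝ ↥(P ⊔ Q))
    (ha : a ≤ P ⊓ Q) (hb : b ≤ P ⊓ Q) (hc : c ≤ P ⊓ Q) (hd : d ≤ P ⊓ Q) :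
    Planar4 a b c d := by
  have hPQ : Module.finrank ℝ ↥(P ⊓ Q) ≤ 3 := by
    have := Submodule.finrank_sup_add_finrank_inf_eq P Q
    omega
  have hle : a ⊔ b ⊔ c ⊔ d ≤ P ⊓ Q := sup_le (sup_le (sup_le ha hb) hc) hd
  exact le_trans (Submodule.finrank_mono hle) hPQ

variable {α : Type*} [Lattice α]

lemma sub1 {A B C D : α} : A ≤ A ⊔ B ⊔ C ⊔ D :=
  (le_sup_left.trans le_sup_left).trans le_sup_left
lemma sub2 {A B C D : α} : B ≤ A ⊔ B ⊔ C ⊔ D :=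
  (le_sup_right.trans le_sup_left).trans le_sup_left
lemma sub3 {A B C D : α} : C ≤ A ⊔ B ⊔ C ⊔ D := le_sup_right.trans le_sup_left
lemma sub4 {A B C D : α} : D ≤ A ⊔ B ⊔ C ⊔ D := le_sup_right

end Aux

theorem focal_quads_planar_of_generic {N : ℕ} (hN : 4 ≤ N)
    (L0 L1 L2 L3 L12 L13 L23 L123 : Submodule ℝ (PV N))
    (h0 : IsLine L0) (h1 : IsLine L1) (h2 : IsLine L2) (h3 : IsLine L3)
    (h12 : IsLine L12) (h13 : IsLine L13) (h23 : IsLine L23) (h123 : IsLine L123)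
    -- adjacent lines intersect (the 12 edges of the cube)
    (a01 : L0 ⊓ L1 ≠ ⊥) (a02 : L0 ⊓ L2 ≠ ⊥) (a03 : L0 ⊓ L3 ≠ ⊥)
    (a112 : L1 ⊓ L12 ≠ ⊥) (a113 : L1 ⊓ L13 ≠ ⊥)
    (a212 : L2 ⊓ L12 ≠ ⊥) (a223 : L2 ⊓ L23 ≠ ⊥)
    (a313 : L3 ⊓ L13 ≠ ⊥) (a323 : L3 ⊓ L23 ≠ ⊥)
    (a12123 : L12 ⊓ L123 ≠ ⊥) (a13123 : L13 ⊓ L123 ≠ ⊥) (a23123 : L23 ⊓ L123 ≠ ⊥)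
    -- opposite lines of each face are skew
    (s1 : L0 ⊓ L12 = ⊥) (s2 : L1 ⊓ L2 = ⊥)
    (s3 : L0 ⊓ L13 = ⊥) (s4 : L1 ⊓ L3 = ⊥)
    (s5 : L0 ⊓ L23 = ⊥) (s6 : L2 ⊓ L3 = ⊥)
    (s7 : L1 ⊓ L123 = ⊥) (s8 : L12 ⊓ L13 = ⊥)
    (s9 : L2 ⊓ L123 = ⊥) (s10 : L12 ⊓ L23 = ⊥)
    (s11 : L3 ⊓ L123 = ⊥) (s12 : L13 ⊓ L23 = ⊥)
    -- genericity: each vertex star of lines spans a 4-dimensional projective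
    -- subspace (linear rank 5)
    (g0 : Module.finrank ℝ ↥(L0 ⊔ L1 ⊔ L2 ⊔ L3) = 5)
    (g1 : Module.finrank ℝ ↥(L1 ⊔ L0 ⊔ L12 ⊔ L13) = 5)
    (g2 : Module.finrank ℝ ↥(L2 ⊔ L0 ⊔ L12 ⊔ L23) = 5)
    (g3 : Module.finrank ℝ ↥(L3 ⊔ L0 ⊔ L13 ⊔ L23) = 5)
    (g12 : Module.finrank ℝ ↥(L12 ⊔ L1 ⊔ L2 ⊔ L123) = 5)
    (g13 : Module.finrank ℝ ↥(L13 ⊔ L1 ⊔ L3 ⊔ L123) = 5)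
    (g23 : Module.finrank ℝ ↥(L23 ⊔ L2 ⊔ L3 ⊔ L123) = 5)
    (g123 : Module.finrank ℝ ↥(L123 ⊔ L12 ⊔ L13 ⊔ L23) = 5) :
    -- every focal quadrilateral is planar
    Planar4 (L0 ⊓ L1) (L2 ⊓ L12) (L23 ⊓ L123) (L3 ⊓ L13) ∧
    Planar4 (L0 ⊓ L2) (L1 ⊓ L12) (L13 ⊓ L123) (L3 ⊓ L23) ∧
    Planar4 (L0 ⊓ L3) (L1 ⊓ L13) (L12 ⊓ L123) (L2 ⊓ L23) := by
  have F023 : Module.finrank ℝ ↥(L0 ⊔ L2 ⊔ L3 ⊔ L23) ≤ 4 :=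
    face_span_rank_le h0 h2 h3 h23 a02 a03 a223 a323 s6
  have F1 : Module.finrank ℝ ↥(L1 ⊔ L12 ⊔ L13 ⊔ L123) ≤ 4 :=
    face_span_rank_le h1 h12 h13 h123 a112 a113 a12123 a13123 s8
  have F013 : Module.finrank ℝ ↥(L0 ⊔ L1 ⊔ L3 ⊔ L13) ≤ 4 :=
    face_span_rank_le h0 h1 h3 h13 a01 a03 a113 a313 s4
  have F2 : Module.finrank ℝ ↥(L2 ⊔ L12 ⊔ L23 ⊔ L123) ≤ 4 :=
    face_span_rank_le h2 h12 h23 h123 a212 a223 a12123 a23123 s10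
  have F012 : Module.finrank ℝ ↥(L0 ⊔ L1 ⊔ L2 ⊔ L12) ≤ 4 :=
    face_span_rank_le h0 h1 h2 h12 a01 a02 a112 a212 s2
  have F3 : Module.finrank ℝ ↥(L3 ⊔ L13 ⊔ L23 ⊔ L123) ≤ 4 :=
    face_span_rank_le h3 h13 h23 h123 a313 a323 a13123 a23123 s12
  have key : ∀ {P Q : Submodule ℝ (PV N)},
      Module.finrank ℝ ↥P ≤ 4 → Module.finrank ℝ ↥Q ≤ 4 →
      L0 ≤ P → L1 ≤ P ⊔ Q → L2 ≤ P ⊔ Q → L3 ≤ P ⊔ Q →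
      5 ≤ Module.finrank ℝ ↥(P ⊔ Q) := by
    intro P Q _ _ p0 p1 p2 p3
    refine le_trans (le_of_eq g0.symm) (Submodule.finrank_mono ?_)
    exact sup_le (sup_le (sup_le (p0.trans le_sup_left) p1) p2) p3
  have pt : ∀ {P Q Lp Lq : Submodule ℝ (PV N)}, Lp ≤ P → Lq ≤ Q →
      Lp ⊓ Lq ≤ P ⊓ Q := fun hp hq =>
    le_inf (inf_le_left.trans hp) (inf_le_right.trans hq)
  refine ⟨?_, ?_, ?_⟩
  · exact planar_of_faces F023 F1
      (key F023 F1 sub1 (sub1.trans le_sup_right) (sub2.trans le_sup_left)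
        (sub3.trans le_sup_left))
      (pt sub1 sub1) (pt sub2 sub2) (pt sub4 sub4) (pt sub3 sub3)
  · exact planar_of_faces F013 F2
      (key F013 F2 sub1 (sub2.trans le_sup_left) (sub1.trans le_sup_right)
        (sub3.trans le_sup_left))
      (pt sub1 sub1) (pt sub2 sub2) (pt sub4 sub4) (pt sub3 sub3)
  · exact planar_of_faces F012 F3
      (key F012 F3 sub1 (sub2.trans le_sup_left) (sub3.trans le_sup_left)
        (sub1.trans le_sup_right))
      (pt sub1 sub1) (pt sub2 sub2) (pt sub4 sub4) (pt sub3 sub3)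
end
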